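/- Under the assumption M^{1−1/k} ≤ H, one has Φ(0) = Σ_{M < m1^k, m2^k ≤ M'} max(1 − |m1^k − m2^k|/(2H), 0) ≪ H · M^{2/k − 1}, where the implied constant depends only on k. -/

import Mathlib

open Finset

noncomputable def ww (H : ℝ) (h : ℤ) : ℝ := max (1 - |(h : ℝ)| / (2 * H)) 0

noncomputable def mRange (k : ℕ) (M M' : ℝ) : Finset ℕ :=
  (Finset.Icc 1 ⌈M'⌉₊).filter (fun m => M < (m : ℝ) ^ k ∧ (m : ℝ) ^ k ≤ M')

/-- `Φ(0) = Σ_{M < m1^k, m2^k ≤ M'} w(m1^k - m2^k)` -/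
noncomputable def PhiZero (k : ℕ) (H M M' : ℝ) : ℝ :=
  ∑ m1 ∈ mRange k M M', ∑ m2 ∈ mRange k M M',
    ww H ((m1 : ℤ) ^ k - (m2 : ℤ) ^ k)

/-! Every `m` counted in `Φ(0)` exceeds `M ^ (1/k)`, so by the mean value inequality
`|m₁ ^ k - m₂ ^ k| ≥ |m₁ - m₂| · M ^ (1 - 1/k)`. As `w ≤ 1` vanishes outside `(-2H, 2H)`, each `m₁`
therefore contributes at most `2R + 1 ≤ 3R` with `R = 2H / M ^ (1 - 1/k) ≥ 2`, and there are at most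
`M' ^ (1/k) ≤ 2 M ^ (1/k)` values of `m₁`; the product is `12 H M ^ (2/k - 1)`. -/

lemma ww_le_one {H : ℝ} (hH : 0 ≤ H) (h : ℤ) : ww H h ≤ 1 :=
  max_le (sub_le_self _ (by positivity)) zero_le_one

lemma ww_eq_zero {H : ℝ} (hH : 0 < H) {h : ℤ} (hh : 2 * H ≤ |(h : ℝ)|) : ww H h = 0 :=
  max_eq_right (by linarith [(one_le_div (by positivity)).2 hh])

lemma sum_ww_le_card_filter {ι : Type*} {H : ℝ} (hH : 0 < H) (s : Finset ι) (f : ι → ℤ) :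
    ∑ i ∈ s, ww H (f i) ≤ #{i ∈ s | |(f i : ℝ)| < 2 * H} := by
  rw [natCast_card_filter]
  refine sum_le_sum fun i _ => ?_
  split_ifs with h
  · exact ww_le_one hH.le _
  · exact (ww_eq_zero hH (not_lt.1 h)).le

lemma abs_sub_mul_le_abs_pow_sub_pow {a b c : ℝ} (hc : 0 ≤ c) (ha : c ≤ a) (hb : c ≤ b) (n : ℕ) :
    |a - b| * (n * c ^ (n - 1)) ≤ |a ^ n - b ^ n| := by
  have hsum : n * c ^ (n - 1) ≤ ∑ i ∈ range n, a ^ i * b ^ (n - 1 - i) := by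
    calc (n : ℝ) * c ^ (n - 1) = ∑ i ∈ range n, c ^ i * c ^ (n - 1 - i) := by
          rw [sum_congr rfl fun i hi => by
            rw [← pow_add, Nat.add_sub_cancel' (Nat.le_sub_one_of_lt (mem_range.1 hi))]]
          simp
      _ ≤ _ := sum_le_sum fun i _ => by
          have : 0 ≤ a := hc.trans ha
          gcongr
  rw [← geom_sum₂_mul, abs_mul, mul_comm,
    abs_of_nonneg ((by positivity : (0 : ℝ) ≤ n * c ^ (n - 1)).trans hsum)]
  gcongr

lemma rpow_one_div_pow_sub_one {M : ℝ} (hM : 0 ≤ M) {k : ℕ} (hk : k ≠ 0) :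
    (M ^ ((1 : ℝ) / k)) ^ (k - 1) = M ^ ((1 : ℝ) - 1 / k) := by
  rw [← Real.rpow_natCast, ← Real.rpow_mul hM, Nat.cast_sub (Nat.one_le_iff_ne_zero.2 hk)]
  congr 1
  field_simp
  ring

lemma card_filter_abs_sub_le (s : Finset ℕ) (m : ℕ) {R : ℝ} (hR : 0 ≤ R) :
    (#(s.filter fun n : ℕ => |(n : ℝ) - m| ≤ R) : ℝ) ≤ 2 * R + 1 := by
  set D := ⌊R⌋₊
  have hsub : (s.filter fun n : ℕ => |(n : ℝ) - m| ≤ R) ⊆ Icc (m - D) (m + D) := by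
    intro n hn
    obtain ⟨hlo, hhi⟩ := abs_le.1 (mem_filter.1 hn).2
    have h₁ : n ≤ D + m := by
      rw [← Nat.floor_add_natCast hR]; exact Nat.le_floor (by linarith)
    have h₂ : m ≤ D + n := by
      rw [← Nat.floor_add_natCast hR]; exact Nat.le_floor (by linarith)
    rw [mem_Icc]; omega
  have hcard : #(Icc (m - D) (m + D)) ≤ 2 * D + 1 := by
    rw [Nat.card_Icc]; omega
  calc (#(s.filter fun n : ℕ => |(n : ℝ) - m| ≤ R) : ℝ) ≤ 2 * D + 1 := by
        exact_mod_cast (card_le_card hsub).trans hcard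
    _ ≤ 2 * R + 1 := by linarith [Nat.floor_le hR]

section mRange

variable {k : ℕ} {M M' : ℝ} {m : ℕ}

lemma rpow_one_div_lt_of_mem_mRange (hk : k ≠ 0) (hM : 0 ≤ M) (hm : m ∈ mRange k M M') :
    M ^ ((1 : ℝ) / k) < m := by
  rw [one_div, Real.rpow_inv_lt_iff_of_pos hM m.cast_nonneg (by positivity), Real.rpow_natCast]
  exact (mem_filter.1 hm).2.1

lemma le_rpow_one_div_of_mem_mRange (hk : k ≠ 0) (hm : m ∈ mRange k M M') :
    (m : ℝ) ≤ M' ^ ((1 : ℝ) / k) := by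
  have hm' := (mem_filter.1 hm).2.2
  rw [one_div, Real.le_rpow_inv_iff_of_pos m.cast_nonneg ((by positivity : (0:ℝ) ≤ _).trans hm')
    (by positivity), Real.rpow_natCast]
  exact hm'

lemma card_mRange_le (hk : k ≠ 0) (hM' : 0 ≤ M') :
    (#(mRange k M M') : ℝ) ≤ M' ^ ((1 : ℝ) / k) := by
  have hsub : mRange k M M' ⊆ Icc 1 ⌊M' ^ ((1 : ℝ) / k)⌋₊ := fun m hm =>
    mem_Icc.2 ⟨(mem_Icc.1 (mem_filter.1 hm).1).1, Nat.le_floor (le_rpow_one_div_of_mem_mRange hk hm)⟩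
  calc (#(mRange k M M') : ℝ) ≤ ⌊M' ^ ((1 : ℝ) / k)⌋₊ := by
        exact_mod_cast (card_le_card hsub).trans (Nat.card_Icc 1 _).le
    _ ≤ _ := Nat.floor_le (by positivity)

lemma sum_ww_mRange_le (hk : k ≠ 0) (hM : 0 < M) {H : ℝ} (hH : 0 < H)
    {m₁ : ℕ} (hm₁ : m₁ ∈ mRange k M M') :
    ∑ m₂ ∈ mRange k M M', ww H ((m₁ : ℤ) ^ k - (m₂ : ℤ) ^ k) ≤
      2 * (2 * H / M ^ ((1 : ℝ) - 1 / k)) + 1 := by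
  set S := mRange k M M'
  have hg : 0 < M ^ ((1 : ℝ) - 1 / k) := Real.rpow_pos_of_pos hM _
  have hnear : (S.filter fun m₂ : ℕ => |(((m₁ : ℤ) ^ k - (m₂ : ℤ) ^ k : ℤ) : ℝ)| < 2 * H) ⊆
      (S.filter fun m₂ : ℕ => |(m₂ : ℝ) - m₁| ≤ 2 * H / M ^ ((1 : ℝ) - 1 / k)) := by
    intro m₂ hm₂
    obtain ⟨hm₂S, hclose⟩ := mem_filter.1 hm₂
    refine mem_filter.2 ⟨hm₂S, (le_div_iff₀ hg).2 ?_⟩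
    have hc := Real.rpow_nonneg hM.le ((1 : ℝ) / k)
    have hgap := abs_sub_mul_le_abs_pow_sub_pow hc (rpow_one_div_lt_of_mem_mRange hk hM.le hm₁).le
      (rpow_one_div_lt_of_mem_mRange hk hM.le hm₂S).le k
    rw [rpow_one_div_pow_sub_one hM.le hk] at hgap
    rw [abs_sub_comm]
    push_cast at hclose
    have hk1 : (1 : ℝ) ≤ k := by exact_mod_cast Nat.one_le_iff_ne_zero.2 hk
    exact (mul_le_mul_of_nonneg_left (le_mul_of_one_le_left hg.le hk1) (abs_nonneg _)).trans
      (hgap.trans hclose.le)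
  calc _ ≤ (#(S.filter fun m₂ : ℕ => |(((m₁ : ℤ) ^ k - (m₂ : ℤ) ^ k : ℤ) : ℝ)| < 2 * H) : ℝ) :=
        sum_ww_le_card_filter hH S _
    _ ≤ #(S.filter fun m₂ : ℕ => |(m₂ : ℝ) - m₁| ≤ 2 * H / M ^ ((1 : ℝ) - 1 / k)) := by
        exact_mod_cast card_le_card hnear
    _ ≤ _ := card_filter_abs_sub_le S m₁ (by positivity)

end mRange

theorem PhiZero_bound (k : ℕ) (hk : 2 ≤ k) :
    ∃ C : ℝ, 0 < C ∧ ∀ H M M' : ℝ, 1 ≤ H → 1 ≤ M → M < M' → M' ≤ 2 * M →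
      M ^ ((1 : ℝ) - 1 / k) ≤ H →
      PhiZero k H M M' ≤ C * H * M ^ ((2 : ℝ) / k - 1) := by
  have hk0 : k ≠ 0 := by omega
  refine ⟨12, by norm_num, fun H M M' hH hM _ hM' hHM => ?_⟩
  have hM0 : 0 < M := one_pos.trans_le hM
  set R := 2 * H / M ^ ((1 : ℝ) - 1 / k)
  have hR : 1 ≤ R := by
    rw [le_div_iff₀ (Real.rpow_pos_of_pos hM0 _)]; linarith
  have hcard : (#(mRange k M M') : ℝ) ≤ 2 * M ^ ((1 : ℝ) / k) :=
    calc _ ≤ M' ^ ((1 : ℝ) / k) := card_mRange_le hk0 (by linarith)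
      _ ≤ (2 * M) ^ ((1 : ℝ) / k) := by gcongr; linarith
      _ = 2 ^ ((1 : ℝ) / k) * M ^ ((1 : ℝ) / k) := Real.mul_rpow zero_le_two hM0.le
      _ ≤ 2 * M ^ ((1 : ℝ) / k) := by
          gcongr
          exact Real.rpow_le_self_of_one_le one_le_two
            (div_le_one_of_le₀ (by exact_mod_cast Nat.one_le_iff_ne_zero.2 hk0) (by positivity))
  calc PhiZero k H M M' ≤ ∑ _m₁ ∈ mRange k M M', (2 * R + 1) :=
        sum_le_sum fun _ hm₁ => sum_ww_mRange_le hk0 hM0 (by linarith) hm₁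
    _ = #(mRange k M M') * (2 * R + 1) := by rw [sum_const, nsmul_eq_mul]
    _ ≤ 2 * M ^ ((1 : ℝ) / k) * (3 * R) := by gcongr; linarith
    _ = 12 * H * M ^ ((2 : ℝ) / k - 1) := by
        rw [show (2 : ℝ) / k - 1 = 1 / k - (1 - 1 / k) by ring, Real.rpow_sub hM0]
        ring
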